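/- arXiv:2504.03575 — 2 statements merged into one kernel-verified Lean document; each statement's English description precedes it below -/
import Mathlib

section
/- Let 𝒞 be a convex body in ℝ^d (d ≥ 2) whose diameter equals 2h and is realized by two points H, H' ∈ 𝒞 lying on the z-axis (the d-th coordinate axis), symmetric about the origin. Let 𝒞₀ be the orthogonal projection of 𝒞 onto the hyperplane E(0) = {z = 0}. Then 2h · Vol_{d−1}(𝒞₀) ≤ d · Vol_d(𝒞). -/
open MeasureTheory Set Pointwise

private lemma auxHasDeriv (m : ℕ) (h : ℝ) (hh : h ≠ 0) (x : ℝ) :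
    HasDerivAt (fun x : ℝ => -(h / (m + 1)) * (1 - x / h) ^ (m + 1))
      ((1 - x / h) ^ m) x := by
  have h1 : HasDerivAt (fun x : ℝ => 1 - x / h) (-(1 / h)) x := by
    simpa using ((hasDerivAt_id x).div_const h).const_sub 1
  have h2 := (h1.pow (m + 1)).const_mul (-(h / (m + 1)))
  refine h2.congr_deriv ?_
  have hm1 : ((m : ℝ) + 1) ≠ 0 := by positivity
  push_cast
  field_simp

private lemma auxInt (m : ℕ) (h : ℝ) (hh : 0 < h) :
    ∫ z in Set.Icc (-h) h, (1 - |z| / h) ^ m = 2 * (h / (m + 1)) := by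
  have hcont : Continuous fun z : ℝ => (1 - |z| / h) ^ m :=
    (continuous_const.sub (continuous_abs.div_const h)).pow m
  rw [MeasureTheory.integral_Icc_eq_integral_Ioc,
    ← intervalIntegral.integral_of_le (by linarith : -h ≤ h)]
  have hii : ∀ a b : ℝ, IntervalIntegrable (fun z : ℝ => (1 - |z| / h) ^ m) volume a b :=
    fun a b => hcont.intervalIntegrable a b
  have hsplit := intervalIntegral.integral_add_adjacent_intervals
    (a := -h) (b := 0) (c := h) (f := fun z : ℝ => (1 - |z| / h) ^ m)
    (hii _ _) (hii _ _)
  rw [← hsplit]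
  have hneg : (∫ z in (-h)..(0 : ℝ), (1 - |z| / h) ^ m)
      = ∫ z in (0 : ℝ)..h, (1 - |z| / h) ^ m := by
    have := intervalIntegral.integral_comp_neg (a := 0) (b := h)
      (fun z : ℝ => (1 - |z| / h) ^ m)
    simp only [abs_neg, neg_zero] at this
    exact this.symm
  have habs : (∫ z in (0 : ℝ)..h, (1 - |z| / h) ^ m)
      = ∫ z in (0 : ℝ)..h, (1 - z / h) ^ m := by
    apply intervalIntegral.integral_congr
    intro z hz
    rw [Set.uIcc_of_le hh.le] at hz
    show (1 - |z| / h) ^ m = (1 - z / h) ^ m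
    rw [abs_of_nonneg hz.1]
  have hftc : (∫ z in (0 : ℝ)..h, (1 - z / h) ^ m) = h / (m + 1) := by
    have hint : IntervalIntegrable (fun z : ℝ => (1 - z / h) ^ m) volume 0 h :=
      ((continuous_const.sub (continuous_id.div_const h)).pow m).intervalIntegrable 0 h
    rw [intervalIntegral.integral_eq_sub_of_hasDerivAt
      (fun x _ => auxHasDeriv m h hh.ne' x) hint]
    rw [div_self hh.ne']
    simp [zero_pow (Nat.succ_ne_zero m)]
  rw [hneg, habs, hftc]
  ring

/-- Let `𝒞` be a convex body in `ℝ^{m+1}` (`m ≥ 1`, so dimension `d = m+1 ≥ 2`)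
whose diameter `2h` is realized by the two points `H = (0,…,0,h)` and `H' = (0,…,0,−h)` on
the last coordinate axis, symmetric about the origin. If `𝒞₀` is the orthogonal projection
of `𝒞` onto the hyperplane `{z = 0}` (dropping the last coordinate), then
`2h · Vol_{d−1}(𝒞₀) ≤ d · Vol_d(𝒞)`. -/
theorem diameter_chord_projection_volume
    (m : ℕ) (hm : 1 ≤ m) (h : ℝ) (hh : 0 < h)
    (𝒞 : Set (EuclideanSpace ℝ (Fin (m + 1))))
    (hcomp : IsCompact 𝒞) (hconv : Convex ℝ 𝒞)
    (hH : (WithLp.toLp 2 (fun i => if i = Fin.last m then h else 0) : EuclideanSpace ℝ (Fin (m + 1))) ∈ 𝒞)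
    (hH' : (WithLp.toLp 2 (fun i => if i = Fin.last m then -h else 0) : EuclideanSpace ℝ (Fin (m + 1))) ∈ 𝒞)
    (hdiam : Metric.diam 𝒞 = 2 * h) :
    ENNReal.ofReal (2 * h) *
        volume ((fun x : EuclideanSpace ℝ (Fin (m + 1)) =>
          (WithLp.toLp 2 (fun i : Fin m => x i.castSucc) : EuclideanSpace ℝ (Fin m))) '' 𝒞) ≤
      ((m + 1 : ℕ) : ENNReal) * volume 𝒞 := by
  classical
  set lastI : Fin (m + 1) := Fin.last m with hlastI
  -- the projection, viewed into the plain pi type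
  set P : EuclideanSpace ℝ (Fin (m + 1)) → (Fin m → ℝ) := fun x j => x j.castSucc with hPdef
  have hPcont : Continuous P := continuous_pi fun j => PiLp.continuous_apply 2 _ (Fin.castSucc j)
  set C₀ : Set (Fin m → ℝ) := P '' 𝒞 with hC₀def
  have hC₀comp : IsCompact C₀ := hcomp.image hPcont
  have hC₀m : MeasurableSet C₀ := hC₀comp.isClosed.measurableSet
  -- 𝒞 viewed in the pi type
  let Cpi : Set (Fin (m + 1) → ℝ) := WithLp.toLp 2 ⁻¹' 𝒞
  have hCm : MeasurableSet Cpi := (hcomp.isClosed.preimage (PiLp.continuous_toLp 2 _)).measurableSet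
  set F : (Fin (m + 1) → ℝ) ≃ᵐ ℝ × (Fin m → ℝ) :=
    MeasurableEquiv.piFinSuccAbove (fun _ : Fin (m + 1) => ℝ) lastI with hFdef
  have hFapp : ∀ y : Fin (m + 1) → ℝ, F y = (y lastI, fun j : Fin m => y j.castSucc) := by
    intro y
    rw [hFdef, MeasurableEquiv.piFinSuccAbove_apply]
    refine Prod.ext rfl ?_
    funext j
    simp only [Fin.removeNth]
    exact congrArg y (Fin.succAbove_last_apply j)
  set S : Set (ℝ × (Fin m → ℝ)) := F '' Cpi with hSdef
  have hSm : MeasurableSet S := F.measurableSet_image.2 hCm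
  -- key convexity estimate: fibers over `t • P x` contain a long interval
  have key : ∀ t : ℝ, 0 ≤ t → t ≤ 1 → ∀ x ∈ 𝒞,
      Icc (t * x lastI - (1 - t) * h) (t * x lastI + (1 - t) * h)
        ⊆ {z : ℝ | (z, t • P x) ∈ S} := by
    intro t ht0 ht1 x hx z hz
    rcases eq_or_lt_of_le ht1 with rfl | htlt
    · have hz' : z = x lastI := by
        simp only [one_mul, sub_self, zero_mul, add_zero, sub_zero, mem_Icc] at hz
        linarith [hz.1, hz.2]
      refine ⟨x, hx, ?_⟩
      rw [hFapp]
      refine Prod.ext (by simpa using hz'.symm) ?_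
      funext j
      simp [hPdef]
    · set d : ℝ := (1 - t) * h with hd
      have hd0 : 0 < d := mul_pos (by linarith) hh
      set c : ℝ := z - t * x lastI with hc
      have hc1 : -d ≤ c := by
        simp only [mem_Icc] at hz
        simp only [hc, hd]
        linarith [hz.1]
      have hc2 : c ≤ d := by
        simp only [mem_Icc] at hz
        simp only [hc, hd]
        linarith [hz.2]
      set a : ℝ := (d + c) / (2 * d) with ha_def
      set b : ℝ := (d - c) / (2 * d) with hb_def
      have ha : 0 ≤ a := div_nonneg (by linarith) (by linarith)
      have hb : 0 ≤ b := div_nonneg (by linarith) (by linarith)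
      have hab : a + b = 1 := by
        rw [ha_def, hb_def, ← add_div]
        field_simp
        ring
      have hq := hconv hH hH' ha hb hab
      have hy := hconv hx hq ht0 (by linarith : (0:ℝ) ≤ 1 - t) (by ring)
      refine ⟨_, hy, ?_⟩
      rw [hFapp]
      have h1t : (1 : ℝ) - t ≠ 0 := by linarith
      refine Prod.ext ?_ ?_
      · show (t • x + (1 - t) • (a • _ + b • _)) lastI = z
        simp only [PiLp.add_apply, PiLp.smul_apply, smul_eq_mul, if_pos rfl, if_true]
        rw [ha_def, hb_def, hd, hc]
        have h1 : (1 - t) * h ≠ 0 := by positivity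
        field_simp
        ring
      · show (fun j : Fin m => (t • x + (1 - t) • (a • _ + b • _)) j.castSucc) = t • P x
        funext j
        have hne : (j.castSucc : Fin (m + 1)) ≠ lastI := (Fin.castSucc_lt_last j).ne
        simp only [PiLp.add_apply, PiLp.smul_apply, smul_eq_mul, if_neg hne, Pi.smul_apply,
          hPdef, mul_zero, add_zero, mul_add, smul_eq_mul]
  -- the comparison double cone
  set sfun : ℝ → ℝ := fun z => 1 - |z| / h with hsfun
  have hscont : Continuous sfun := continuous_const.sub (continuous_abs.div_const h)
  set Φ : ℝ × (Fin m → ℝ) → ℝ × (Fin m → ℝ) := fun p => (p.1, sfun p.1 • p.2) with hΦ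
  have hΦcont : Continuous Φ :=
    continuous_fst.prodMk ((hscont.comp continuous_fst).smul continuous_snd)
  set D : Set (ℝ × (Fin m → ℝ)) := Φ '' (Icc (-h) h ×ˢ C₀) with hDdef
  have hDcomp : IsCompact D := (isCompact_Icc.prod hC₀comp).image hΦcont
  have hDm : MeasurableSet D := hDcomp.isClosed.measurableSet
  -- fiberwise comparison
  have hfiber : ∀ w : Fin m → ℝ,
      volume ((fun z : ℝ => (z, w)) ⁻¹' D) ≤ volume ((fun z : ℝ => (z, w)) ⁻¹' S) := by
    intro w
    rcases Set.eq_empty_or_nonempty ((fun z : ℝ => (z, w)) ⁻¹' D) with hem | ⟨z₀, hz₀⟩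
    · rw [hem]; simp
    · -- the set of admissible scales
      set T : Set ℝ := Prod.fst '' ((Icc (0:ℝ) 1 ×ˢ C₀) ∩ {p : ℝ × (Fin m → ℝ) | p.1 • p.2 = w})
        with hT
      have hTmem : ∀ t : ℝ, t ∈ T ↔ (t ∈ Icc (0:ℝ) 1 ∧ ∃ y ∈ C₀, t • y = w) := by
        intro t
        constructor
        · rintro ⟨⟨t', y⟩, ⟨⟨ht', hy⟩, hsm⟩, rfl⟩
          exact ⟨ht', y, hy, hsm⟩
        · rintro ⟨ht, y, hy, hsm⟩
          exact ⟨(t, y), ⟨⟨ht, hy⟩, hsm⟩, rfl⟩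
      have hTcomp : IsCompact T := by
        apply IsCompact.image _ continuous_fst
        exact (isCompact_Icc.prod hC₀comp).inter_right
          (isClosed_eq (continuous_fst.smul continuous_snd) continuous_const)
      have hmemD : ∀ z : ℝ, (z, w) ∈ D → z ∈ Icc (-h) h ∧ sfun z ∈ T := by
        rintro z ⟨⟨z', y⟩, ⟨hz', hy⟩, heq⟩
        have hz1 : z' = z := congrArg Prod.fst heq
        subst hz1
        have hw : sfun z' • y = w := congrArg Prod.snd heq
        have hsz : sfun z' ∈ Icc (0:ℝ) 1 := by
          have h1 : |z'| ≤ h := abs_le.2 ⟨hz'.1, hz'.2⟩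
          constructor
          · simp only [hsfun]
            rw [sub_nonneg]
            exact div_le_one_of_le₀ h1 hh.le
          · simp only [hsfun]
            have : 0 ≤ |z'| / h := div_nonneg (abs_nonneg _) hh.le
            linarith
        exact ⟨hz', (hTmem _).2 ⟨hsz, y, hy, hw⟩⟩
      have hTne : T.Nonempty := ⟨sfun z₀, (hmemD z₀ hz₀).2⟩
      set t₀ : ℝ := sInf T with ht₀def
      have ht₀T : t₀ ∈ T := hTcomp.sInf_mem hTne
      obtain ⟨ht₀01, y₀, hy₀, hy₀w⟩ := (hTmem t₀).1 ht₀T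
      -- upper bound for the cone fiber
      have hsub1 : (fun z : ℝ => (z, w)) ⁻¹' D ⊆ Icc (-((1 - t₀) * h)) ((1 - t₀) * h) := by
        intro z hz
        obtain ⟨hzIcc, hszT⟩ := hmemD z hz
        have hle : t₀ ≤ sfun z := csInf_le hTcomp.bddBelow hszT
        have : |z| ≤ (1 - t₀) * h := by
          have h1 : |z| / h ≤ 1 - t₀ := by
            simp only [hsfun] at hle; linarith
          calc |z| = |z| / h * h := by field_simp
          _ ≤ (1 - t₀) * h := mul_le_mul_of_nonneg_right h1 hh.le
        exact abs_le.1 this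
      -- lower bound for the body fiber
      obtain ⟨x, hx, hPx⟩ := hy₀
      have hw' : w = t₀ • P x := by rw [hPx]; exact hy₀w.symm
      have hsub2 : Icc (t₀ * x lastI - (1 - t₀) * h) (t₀ * x lastI + (1 - t₀) * h)
          ⊆ (fun z : ℝ => (z, w)) ⁻¹' S := by
        intro z hz
        have := key t₀ ht₀01.1 ht₀01.2 x hx hz
        simpa [hw'] using this
      calc volume ((fun z : ℝ => (z, w)) ⁻¹' D)
          ≤ volume (Icc (-((1 - t₀) * h)) ((1 - t₀) * h)) := measure_mono hsub1
        _ = ENNReal.ofReal (2 * ((1 - t₀) * h)) := by rw [Real.volume_Icc]; ring_nf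
        _ = volume (Icc (t₀ * x lastI - (1 - t₀) * h) (t₀ * x lastI + (1 - t₀) * h)) := by
            rw [Real.volume_Icc]; ring_nf
        _ ≤ volume ((fun z : ℝ => (z, w)) ⁻¹' S) := measure_mono hsub2
  -- volume of 𝒞 equals volume of S
  have hvolC : volume 𝒞 = (volume : Measure (ℝ × (Fin m → ℝ))) S := by
    have e1 : volume 𝒞 = (volume : Measure (Fin (m + 1) → ℝ)) Cpi :=
      ((PiLp.volume_preserving_toLp (Fin (m + 1))).measure_preimage
        hcomp.isClosed.measurableSet.nullMeasurableSet).symm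
    have mp := (volume_preserving_piFinSuccAbove (fun _ : Fin (m + 1) => ℝ) lastI).symm F
    have e2 : (volume : Measure (ℝ × (Fin m → ℝ))) (F.symm ⁻¹' Cpi)
        = (volume : Measure (Fin (m + 1) → ℝ)) Cpi :=
      mp.measure_preimage hCm.nullMeasurableSet
    rw [e1, ← e2, hSdef, ← MeasurableEquiv.image_eq_preimage_symm]
  -- compare via Fubini over the second coordinate
  have hDS : (volume : Measure (ℝ × (Fin m → ℝ))) D ≤ volume S := by
    rw [Measure.volume_eq_prod, Measure.prod_apply_symm hDm, Measure.prod_apply_symm hSm]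
    exact lintegral_mono hfiber
  -- compute volume of D via Fubini over the first coordinate
  have hslice : ∀ z : ℝ, (Prod.mk z) ⁻¹' D = if z ∈ Icc (-h) h then (sfun z • C₀ : Set (Fin m → ℝ)) else (∅ : Set (Fin m → ℝ)) := by
    intro z
    ext w
    simp only [mem_preimage]
    constructor
    · rintro ⟨⟨z', y⟩, ⟨hz', hy⟩, heq⟩
      have hz1 : z' = z := congrArg Prod.fst heq
      subst hz1
      have hw : sfun z' • y = w := congrArg Prod.snd heq
      rw [if_pos hz']
      exact ⟨y, hy, hw⟩
    · intro hw
      by_cases hzIcc : z ∈ Icc (-h) h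
      · rw [if_pos hzIcc] at hw
        obtain ⟨y, hy, hyw⟩ := hw
        exact ⟨(z, y), ⟨hzIcc, hy⟩, by rw [hΦ]; simp [hyw]⟩
      · rw [if_neg hzIcc] at hw
        exact absurd hw (notMem_empty w)
  have hvolD : (volume : Measure (ℝ × (Fin m → ℝ))) D
      = ENNReal.ofReal (2 * (h / (m + 1))) * volume C₀ := by
    rw [Measure.volume_eq_prod, Measure.prod_apply hDm]
    have heq1 : ∀ z : ℝ, volume ((Prod.mk z) ⁻¹' D)
        = (Icc (-h) h).indicator (fun z => ENNReal.ofReal (sfun z ^ m) * volume C₀) z := by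
      intro z
      rw [hslice z]
      by_cases hz : z ∈ Icc (-h) h
      · rw [if_pos hz, Set.indicator_of_mem hz]
        have := Measure.addHaar_smul (volume : Measure (Fin m → ℝ)) (sfun z) C₀
        rw [this, Module.finrank_fin_fun]
        congr 2
        have hsz : 0 ≤ sfun z := by
          have h1 : |z| ≤ h := abs_le.2 ⟨hz.1, hz.2⟩
          simp only [hsfun]
          rw [sub_nonneg]
          exact div_le_one_of_le₀ h1 hh.le
        rw [abs_of_nonneg (pow_nonneg hsz m)]
      · rw [if_neg hz, Set.indicator_of_notMem hz, measure_empty]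
    simp_rw [heq1]
    rw [lintegral_indicator measurableSet_Icc]
    rw [lintegral_mul_const _ (Measurable.ennreal_ofReal (f := fun z => sfun z ^ m) (hscont.pow m).measurable)]
    congr 1
    rw [← ofReal_integral_eq_lintegral_ofReal (f := fun z => sfun z ^ m)
      ((hscont.pow m).integrableOn_Icc)
      (ae_restrict_of_forall_mem measurableSet_Icc (fun z hz => by
        have h1 : |z| ≤ h := abs_le.2 ⟨hz.1, hz.2⟩
        have hsz : 0 ≤ sfun z := by
          simp only [hsfun]
          rw [sub_nonneg]
          exact div_le_one_of_le₀ h1 hh.le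
        exact pow_nonneg hsz m))]
    rw [auxInt m h hh]
  -- put everything together
  rw [hvolC]
  have hgoal : ENNReal.ofReal (2 * h) * (volume : Measure (Fin m → ℝ)) C₀
      ≤ ((m + 1 : ℕ) : ENNReal) * (volume : Measure (ℝ × (Fin m → ℝ))) S := by
    calc ENNReal.ofReal (2 * h) * (volume : Measure (Fin m → ℝ)) C₀
        = ((m + 1 : ℕ) : ENNReal)
            * (ENNReal.ofReal (2 * (h / (m + 1))) * (volume : Measure (Fin m → ℝ)) C₀) := by
          rw [← mul_assoc]
          congr 1
          rw [← ENNReal.ofReal_natCast (m + 1), ← ENNReal.ofReal_mul (by positivity)]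
          congr 1
          have hm1 : ((m : ℝ) + 1) ≠ 0 := by positivity
          push_cast
          field_simp
      _ ≤ ((m + 1 : ℕ) : ENNReal) * (volume : Measure (ℝ × (Fin m → ℝ))) S := by
          rw [← hvolD]
          exact mul_le_mul_right hDS _
  have himg : ((fun x : EuclideanSpace ℝ (Fin (m + 1)) =>
      (WithLp.toLp 2 (fun i : Fin m => x i.castSucc) : EuclideanSpace ℝ (Fin m))) '' 𝒞)
      = WithLp.ofLp ⁻¹' C₀ := by
    ext y
    constructor
    · rintro ⟨x, hx, rfl⟩
      exact ⟨x, hx, rfl⟩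
    · rintro ⟨x, hx, hxy⟩
      exact ⟨x, hx, congrArg (WithLp.toLp 2) hxy⟩
  rw [himg, (PiLp.volume_preserving_ofLp (Fin m)).measure_preimage hC₀m.nullMeasurableSet]
  exact hgoal
end

section
/- Let d ≥ 2, h > 0, s ∈ (−h, h), and let Q₀ be a (d−1)-dimensional hyperrectangle contained in the hyperplane E(s) = {x ∈ ℝ^d : x_d = s}. Let Y be the convex hull of {H, H'} ∪ Q₀, where H = (0,…,0,h) and H' = (0,…,0,−h). Then for every λ ∈ (0,1), Y contains a (d-dimensional) hyperrectangle of volume 2λh·(1−λ)^{d−1}·Vol_{d−1}(Q₀); in particular (taking λ = 1/d), Y contains a hyperrectangle of volume (2h/d)·(1−1/d)^{d−1}·Vol_{d−1}(Q₀). -/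
open MeasureTheory Set

lemma box_eq_preimage' {n : ℕ} (a b : Fin n → ℝ) :
    {x : EuclideanSpace ℝ (Fin n) | ∀ i, x i ∈ Set.Icc (a i) (b i)} =
      (MeasurableEquiv.toLp 2 (Fin n → ℝ)).symm ⁻¹'
        (Set.univ.pi fun i => Set.Icc (a i) (b i)) := by
  ext x
  simp only [Set.mem_preimage, Set.mem_pi, Set.mem_univ, forall_true_left, Set.mem_setOf_eq,
    MeasurableEquiv.coe_toLp_symm, MeasurableEquiv.coe_mk, forall_const]

lemma box_measurable' {n : ℕ} (a b : Fin n → ℝ) :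
    MeasurableSet {x : EuclideanSpace ℝ (Fin n) | ∀ i, x i ∈ Set.Icc (a i) (b i)} := by
  rw [box_eq_preimage']
  exact (MeasurableEquiv.toLp 2 (Fin n → ℝ)).symm.measurable
    (MeasurableSet.univ_pi fun i => measurableSet_Icc)

lemma volume_box' {n : ℕ} (a b : Fin n → ℝ) :
    volume {x : EuclideanSpace ℝ (Fin n) | ∀ i, x i ∈ Set.Icc (a i) (b i)} =
      ∏ i, ENNReal.ofReal (b i - a i) := by
  rw [box_eq_preimage',
    (EuclideanSpace.volume_preserving_symm_measurableEquiv_toLp (Fin n)).measure_preimage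
      ((MeasurableSet.univ_pi fun i => measurableSet_Icc).nullMeasurableSet),
    volume_pi_pi]
  simp [Real.volume_Icc]

set_option maxHeartbeats 2000000 in
/-- In `ℝ^{m+1}` (`m ≥ 1`, so dimension `d = m+1 ≥ 2`), let `Q₀` be a
`(d−1)`-dimensional hyperrectangle (an isometric image of a box `∏ᵢ [aᵢ,bᵢ] ⊆ ℝ^m`)
contained in the hyperplane `E(s) = {x : x_d = s}` with `s ∈ (−h,h)`, and let `Y` be the
convex hull of `{H, H'} ∪ Q₀`, where `H = (0,…,0,h)` and `H' = (0,…,0,−h)`. Then for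
every `λ ∈ (0,1)`, `Y` contains a `d`-dimensional hyperrectangle (a rigid-motion image of
a box) of volume `2λh(1−λ)^{d−1} · Vol_{d−1}(Q₀)`. -/
theorem double_pyramid_contains_hyperrectangle
    (m : ℕ) (hm : 1 ≤ m) (h s : ℝ) (hh : 0 < h) (hs : s ∈ Set.Ioo (-h) h)
    (f : EuclideanSpace ℝ (Fin m) →ᵃⁱ[ℝ] EuclideanSpace ℝ (Fin (m + 1)))
    (a b : Fin m → ℝ) (hab : ∀ i, a i ≤ b i)
    (Q₀ : Set (EuclideanSpace ℝ (Fin (m + 1))))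
    (hQ₀ : Q₀ = f '' {x : EuclideanSpace ℝ (Fin m) | ∀ i, x i ∈ Set.Icc (a i) (b i)})
    (hplane : ∀ x ∈ Q₀, x (Fin.last m) = s)
    (H H' : EuclideanSpace ℝ (Fin (m + 1)))
    (hHdef : H = fun i => if i = Fin.last m then h else 0)
    (hH'def : H' = fun i => if i = Fin.last m then -h else 0) :
    ∀ l : ℝ, l ∈ Set.Ioo (0 : ℝ) 1 →
      ∃ (g : EuclideanSpace ℝ (Fin (m + 1)) ≃ᵃⁱ[ℝ] EuclideanSpace ℝ (Fin (m + 1)))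
        (a' b' : Fin (m + 1) → ℝ),
        (g '' {x : EuclideanSpace ℝ (Fin (m + 1)) | ∀ i, x i ∈ Set.Icc (a' i) (b' i)}) ⊆
            convexHull ℝ ({H, H'} ∪ Q₀) ∧
          volume (g ''
              {x : EuclideanSpace ℝ (Fin (m + 1)) | ∀ i, x i ∈ Set.Icc (a' i) (b' i)}) =
            ENNReal.ofReal (2 * l * h * (1 - l) ^ m) *
              volume {x : EuclideanSpace ℝ (Fin m) | ∀ i, x i ∈ Set.Icc (a i) (b i)} := by
  obtain ⟨hs1, hs2⟩ := hs
  intro l hl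
  obtain ⟨hl0, hl1⟩ := hl
  have h1l : (0:ℝ) < 1 - l := by linarith
  by_cases hdeg : ∀ i, a i < b i
  case neg =>
    push_neg at hdeg
    obtain ⟨i0, hi0⟩ := hdeg
    have hba : b i0 - a i0 = 0 := by have := hab i0; linarith
    refine ⟨AffineIsometryEquiv.refl ℝ _, (fun i => H i), (fun i => H i), ?_, ?_⟩
    · intro y hy
      obtain ⟨x, hx, rfl⟩ := hy
      have hxH : x = H := PiLp.ext fun i => le_antisymm (hx i).2 (hx i).1
      simp only [AffineIsometryEquiv.coe_refl, id_eq]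
      rw [hxH]
      exact subset_convexHull ℝ _ (Or.inl (Set.mem_insert _ _))
    · have himg : (AffineIsometryEquiv.refl ℝ (EuclideanSpace ℝ (Fin (m+1)))) ''
          {x : EuclideanSpace ℝ (Fin (m + 1)) | ∀ i, x i ∈ Set.Icc (H i) (H i)} =
          {x : EuclideanSpace ℝ (Fin (m + 1)) | ∀ i, x i ∈ Set.Icc (H i) (H i)} := by
        simp
      rw [himg, volume_box', volume_box']
      rw [Finset.prod_eq_zero (Finset.mem_univ (0 : Fin (m+1))) (by simp),
        Finset.prod_eq_zero (Finset.mem_univ i0) (by simp [hba]), mul_zero]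
  case pos =>
    -- Step A: the linear part of f kills the last coordinate
    have hfs : ∀ x : EuclideanSpace ℝ (Fin m), (∀ i, x i ∈ Set.Icc (a i) (b i)) →
        f x (Fin.last m) = s := fun x hx => hplane _ (hQ₀ ▸ Set.mem_image_of_mem f hx)
    set aE : EuclideanSpace ℝ (Fin m) := (WithLp.equiv 2 (Fin m → ℝ)).symm a with haE
    have haEapp : ∀ i, aE i = a i := fun i => rfl
    have haEmem : ∀ i, aE i ∈ Set.Icc (a i) (b i) := fun i => ⟨le_refl _, hab i⟩
    have hsingle : ∀ i : Fin m,
        f.linearIsometry (EuclideanSpace.single i 1) (Fin.last m) = 0 := by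
      intro i
      have hpt : ∀ j, (((b i - a i) • EuclideanSpace.single i (1:ℝ)) +ᵥ aE) j
          ∈ Set.Icc (a j) (b j) := by
        intro j
        have hco : (((b i - a i) • EuclideanSpace.single i (1:ℝ)) +ᵥ aE) j
            = (b i - a i) * (if j = i then 1 else 0) + a j := by
          have h1 : (((b i - a i) • EuclideanSpace.single i (1:ℝ)) +ᵥ aE) j
              = (b i - a i) • (EuclideanSpace.single i (1:ℝ)) j + aE j := rfl
          rw [h1, haEapp, EuclideanSpace.single_apply, smul_eq_mul]
        rcases eq_or_ne j i with hji | hji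
        · subst hji; rw [hco, if_pos rfl]
          exact ⟨by nlinarith [hab j], by nlinarith [hab j]⟩
        · rw [hco, if_neg hji]
          exact ⟨by nlinarith [hab j], by nlinarith [hab j]⟩
      have hkey := hfs _ hpt
      rw [f.map_vadd] at hkey
      have hkey2 : (f.linearIsometry ((b i - a i) • EuclideanSpace.single i (1:ℝ)))
          (Fin.last m) + f aE (Fin.last m) = s := hkey
      rw [hfs aE haEmem] at hkey2
      have hsm : f.linearIsometry ((b i - a i) • EuclideanSpace.single i (1:ℝ))
          = (b i - a i) • f.linearIsometry (EuclideanSpace.single i (1:ℝ)) :=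
        f.linearIsometry.map_smul _ _
      rw [hsm, PiLp.smul_apply, smul_eq_mul] at hkey2
      have hz : (b i - a i) * f.linearIsometry (EuclideanSpace.single i (1:ℝ)) (Fin.last m)
          = 0 := by linarith
      have hne : b i - a i ≠ 0 := by have := hdeg i; linarith
      exact (mul_eq_zero.1 hz).resolve_left hne
    have hlin0 : ∀ v : EuclideanSpace ℝ (Fin m), f.linearIsometry v (Fin.last m) = 0 := by
      intro v
      have hL : (EuclideanSpace.projₗ (Fin.last m)).comp f.linearIsometry.toLinearMap
          = (0 : EuclideanSpace ℝ (Fin m) →ₗ[ℝ] ℝ) := by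
        apply (EuclideanSpace.basisFun (Fin m) ℝ).toBasis.ext
        intro i
        simp only [OrthonormalBasis.coe_toBasis, EuclideanSpace.basisFun_apply,
          LinearMap.comp_apply, LinearIsometry.coe_toLinearMap, LinearMap.zero_apply]
        exact hsingle i
      simpa using LinearMap.congr_fun hL v
    -- Step B: construct the rotation G and translation c
    set drop : EuclideanSpace ℝ (Fin (m+1)) → EuclideanSpace ℝ (Fin m) :=
      fun x => (WithLp.equiv 2 (Fin m → ℝ)).symm (fun j => x (Fin.castSucc j)) with hdrop
    have drop_apply : ∀ (x : EuclideanSpace ℝ (Fin (m+1))) (j : Fin m),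
        drop x j = x (Fin.castSucc j) := fun _ _ => rfl
    set G0 : EuclideanSpace ℝ (Fin (m + 1)) →ₗ[ℝ] EuclideanSpace ℝ (Fin (m + 1)) :=
      { toFun := fun x => (WithLp.equiv 2 (Fin (m+1) → ℝ)).symm
          (Fin.snoc (fun i => f.linearIsometry (drop x) (Fin.castSucc i)) (x (Fin.last m)))
        map_add' := by
          intro x y
          have hadd : drop (x + y) = drop x + drop y := rfl
          ext j
          refine Fin.lastCases ?_ (fun i => ?_) j
          · simp [PiLp.add_apply, WithLp.equiv_symm_apply, PiLp.toLp_apply, Fin.snoc_last]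
          · simp [PiLp.add_apply, WithLp.equiv_symm_apply, PiLp.toLp_apply, Fin.snoc_castSucc, hadd,
              map_add]
        map_smul' := by
          intro r x
          have hsm : drop (r • x) = r • drop x := rfl
          ext j
          refine Fin.lastCases ?_ (fun i => ?_) j
          · simp [PiLp.smul_apply, WithLp.equiv_symm_apply, PiLp.toLp_apply, Fin.snoc_last]
          · simp [PiLp.smul_apply, WithLp.equiv_symm_apply, PiLp.toLp_apply, Fin.snoc_castSucc, hsm,
              _root_.map_smul] } with hG0def
    have hG0cs : ∀ (x : EuclideanSpace ℝ (Fin (m+1))) (i : Fin m),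
        G0 x (Fin.castSucc i) = f.linearIsometry (drop x) (Fin.castSucc i) := by
      intro x i
      simp [hG0def, WithLp.equiv_symm_apply, PiLp.toLp_apply, Fin.snoc_castSucc]
    have hG0last : ∀ (x : EuclideanSpace ℝ (Fin (m+1))),
        G0 x (Fin.last m) = x (Fin.last m) := by
      intro x
      simp [hG0def, WithLp.equiv_symm_apply, PiLp.toLp_apply, Fin.snoc_last]
    have hG0norm : ∀ x, ‖G0 x‖ = ‖x‖ := by
      intro x
      rw [EuclideanSpace.norm_eq, EuclideanSpace.norm_eq]
      congr 1
      rw [Fin.sum_univ_castSucc, Fin.sum_univ_castSucc, hG0last]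
      have e2 : ∑ j : Fin (m+1), ‖f.linearIsometry (drop x) j‖^2
          = ∑ i : Fin m, ‖drop x i‖^2 := by
        have hn := f.linearIsometry.norm_map (drop x)
        rw [EuclideanSpace.norm_eq, EuclideanSpace.norm_eq] at hn
        have h1 : (0:ℝ) ≤ ∑ j : Fin (m+1), ‖f.linearIsometry (drop x) j‖^2 :=
          Finset.sum_nonneg fun _ _ => sq_nonneg _
        have h2 : (0:ℝ) ≤ ∑ i : Fin m, ‖drop x i‖^2 :=
          Finset.sum_nonneg fun _ _ => sq_nonneg _
        rw [← Real.sq_sqrt h1, ← Real.sq_sqrt h2, hn]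
      have e1 : ∑ j : Fin (m+1), ‖f.linearIsometry (drop x) j‖^2
          = ∑ i : Fin m, ‖f.linearIsometry (drop x) (Fin.castSucc i)‖^2 := by
        rw [Fin.sum_univ_castSucc, hlin0 (drop x)]
        simp
      have e3 : ∑ i : Fin m, ‖G0 x (Fin.castSucc i)‖^2
          = ∑ i : Fin m, ‖x (Fin.castSucc i)‖^2 := by
        calc ∑ i : Fin m, ‖G0 x (Fin.castSucc i)‖^2
            = ∑ i : Fin m, ‖f.linearIsometry (drop x) (Fin.castSucc i)‖^2 := by
              refine Finset.sum_congr rfl fun i _ => by rw [hG0cs]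
          _ = ∑ i : Fin m, ‖drop x i‖^2 := by rw [← e1, e2]
          _ = ∑ i : Fin m, ‖x (Fin.castSucc i)‖^2 := by
              refine Finset.sum_congr rfl fun i _ => by rw [drop_apply]
      rw [e3]
    set GE : EuclideanSpace ℝ (Fin (m+1)) ≃ₗᵢ[ℝ] EuclideanSpace ℝ (Fin (m+1)) :=
      LinearIsometry.toLinearIsometryEquiv ⟨G0, hG0norm⟩ rfl with hGEdef
    have hGEapp : ∀ x, GE x = G0 x := fun x =>
      LinearIsometry.toLinearIsometryEquiv_apply _ _ x
    set c : EuclideanSpace ℝ (Fin (m+1)) := (WithLp.equiv 2 (Fin (m+1) → ℝ)).symm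
      (Fin.snoc (fun i => (1 - l) * f 0 (Fin.castSucc i)) 0) with hcdef
    have hccs : ∀ i : Fin m, c (Fin.castSucc i) = (1-l) * f 0 (Fin.castSucc i) := by
      intro i; simp [hcdef, WithLp.equiv_symm_apply, PiLp.toLp_apply, Fin.snoc_castSucc]
    have hclast : c (Fin.last m) = 0 := by
      simp [hcdef, WithLp.equiv_symm_apply, PiLp.toLp_apply, Fin.snoc_last]
    set g : EuclideanSpace ℝ (Fin (m+1)) ≃ᵃⁱ[ℝ] EuclideanSpace ℝ (Fin (m+1)) :=
      GE.toAffineIsometryEquiv.trans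
        (AffineIsometryEquiv.constVAdd ℝ (EuclideanSpace ℝ (Fin (m+1))) c) with hgdef
    have hgapp : ∀ x, g x = c + GE x := by
      intro x
      rw [hgdef, AffineIsometryEquiv.coe_trans]
      simp only [Function.comp_apply, AffineIsometryEquiv.coe_constVAdd,
        LinearIsometryEquiv.coe_toAffineIsometryEquiv, vadd_eq_add]
    have hgcoord : ∀ x j, g x j = c j + G0 x j := by
      intro x j
      rw [hgapp x, hGEapp x]
      rfl
    -- coordinates of H and H'
    have hHlast : H (Fin.last m) = h := by rw [hHdef]; simp
    have hH'last : H' (Fin.last m) = -h := by rw [hH'def]; simp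
    have hHcs : ∀ i : Fin m, H (Fin.castSucc i) = 0 := by
      intro i; rw [hHdef]; simp [(Fin.castSucc_lt_last i).ne]
    have hH'cs : ∀ i : Fin m, H' (Fin.castSucc i) = 0 := by
      intro i; rw [hH'def]; simp [(Fin.castSucc_lt_last i).ne]
    refine ⟨g, Fin.snoc (fun i => (1-l) * a i) ((1-l)*s - l*h),
      Fin.snoc (fun i => (1-l) * b i) ((1-l)*s + l*h), ?_, ?_⟩
    · -- inclusion in the convex hull
      rintro y ⟨x, hx, rfl⟩
      set x₀ : EuclideanSpace ℝ (Fin m) := drop x with hx₀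
      set t : ℝ := x (Fin.last m) with ht
      have hxcs : ∀ i : Fin m, x (Fin.castSucc i) ∈ Set.Icc ((1-l)*a i) ((1-l)*b i) := by
        intro i
        have := hx (Fin.castSucc i)
        simpa [Fin.snoc_castSucc] using this
      have hxlast : t ∈ Set.Icc ((1-l)*s - l*h) ((1-l)*s + l*h) := by
        have := hx (Fin.last m)
        simpa [Fin.snoc_last] using this
      set w : EuclideanSpace ℝ (Fin m) := (1-l)⁻¹ • x₀ with hwdef
      have hw : ∀ i, w i ∈ Set.Icc (a i) (b i) := by
        intro i
        have hwi : w i = (1-l)⁻¹ * x (Fin.castSucc i) := rfl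
        have hinv : (1-l)⁻¹ * (1-l) = 1 := inv_mul_cancel₀ (ne_of_gt h1l)
        have hipos : (0:ℝ) ≤ (1-l)⁻¹ := (inv_pos.2 h1l).le
        constructor
        · have h1 := mul_le_mul_of_nonneg_left (hxcs i).1 hipos
          rw [← mul_assoc, hinv, one_mul] at h1
          rw [hwi]; exact h1
        · have h1 := mul_le_mul_of_nonneg_left (hxcs i).2 hipos
          rw [← mul_assoc, hinv, one_mul] at h1
          rw [hwi]; exact h1
      have hq : f w ∈ Q₀ := hQ₀ ▸ Set.mem_image_of_mem f hw
      have hqlast : f w (Fin.last m) = s := hplane _ hq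
      set α : ℝ := (l*h + (t - (1-l)*s))/(2*h) with hα
      set β : ℝ := (l*h - (t - (1-l)*s))/(2*h) with hβ
      have hα0 : 0 ≤ α := div_nonneg (by linarith [hxlast.1]) (by linarith)
      have hβ0 : 0 ≤ β := div_nonneg (by linarith [hxlast.2]) (by linarith)
      have hαβ : α + β = l := by
        rw [hα, hβ]; field_simp; ring
      have hHmem : H ∈ convexHull ℝ ({H, H'} ∪ Q₀) :=
        subset_convexHull ℝ _ (Or.inl (Set.mem_insert _ _))
      have hH'mem : H' ∈ convexHull ℝ ({H, H'} ∪ Q₀) :=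
        subset_convexHull ℝ _ (Or.inl (Set.mem_insert_of_mem _ rfl))
      have hqmem : f w ∈ convexHull ℝ ({H, H'} ∪ Q₀) := subset_convexHull ℝ _ (Or.inr hq)
      have hzmem : (α/l) • H + (β/l) • H' ∈ convexHull ℝ ({H, H'} ∪ Q₀) :=
        (convex_convexHull ℝ _) hHmem hH'mem (div_nonneg hα0 hl0.le)
          (div_nonneg hβ0 hl0.le) (by rw [← add_div, hαβ, div_self hl0.ne'])
      have hpm : (1-l) • f w + l • ((α/l) • H + (β/l) • H')
          ∈ convexHull ℝ ({H, H'} ∪ Q₀) :=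
        (convex_convexHull ℝ _) hqmem hzmem (by linarith) hl0.le (by ring)
      have hfw : f w = f.linearIsometry w + f 0 := by
        have := f.map_vadd 0 w
        simpa [vadd_eq_add] using this
      have hflw : f.linearIsometry w = (1-l)⁻¹ • f.linearIsometry x₀ := by
        rw [hwdef]; exact f.linearIsometry.map_smul _ _
      have hrhs : ∀ j, ((1-l) • f w + l • ((α/l) • H + (β/l) • H')) j
          = (1-l) * f w j + l * ((α/l) * H j + (β/l) * H' j) := fun j => rfl
      have hgx : g x = (1-l) • f w + l • ((α/l) • H + (β/l) • H') := by
        ext j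
        refine Fin.lastCases ?_ (fun i => ?_) j
        · rw [hgcoord, hclast, hG0last, hrhs, hqlast, hHlast, hH'last, ← ht]
          have key : (α - β) * h = t - (1-l)*s := by
            rw [hα, hβ]; field_simp; ring
          have hl' : l ≠ 0 := hl0.ne'
          field_simp
          nlinarith [key]
        · rw [hgcoord, hccs, hG0cs, hrhs, hHcs, hH'cs, hfw]
          have hco : (f.linearIsometry w + f 0) (Fin.castSucc i)
              = (1-l)⁻¹ * f.linearIsometry x₀ (Fin.castSucc i) + f 0 (Fin.castSucc i) := by
            rw [hflw]; rfl
          rw [hco, ← hx₀]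
          field_simp
          ring
      rw [hgx]
      exact hpm
    · -- volume computation
      have himgeq : ⇑g = (fun y => c + y) ∘ ⇑GE := funext fun x => hgapp x
      set S : Set (EuclideanSpace ℝ (Fin (m+1))) :=
        {x : EuclideanSpace ℝ (Fin (m+1)) | ∀ i, x i ∈ Set.Icc
          ((Fin.snoc (fun i => (1-l) * a i) ((1-l)*s - l*h) : Fin (m+1) → ℝ) i)
          ((Fin.snoc (fun i => (1-l) * b i) ((1-l)*s + l*h) : Fin (m+1) → ℝ) i)} with hSdef
      have hv1 : volume (⇑g '' S) = volume S := by
        rw [himgeq, Set.image_comp]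
        rw [show (fun y => c + y) = (c +ᵥ ·) from rfl, Set.image_vadd, measure_vadd]
        have h2 : ⇑GE '' S = ⇑(GE.symm) ⁻¹' S := by
          ext y
          constructor
          · rintro ⟨x, hx, rfl⟩
            simpa [LinearIsometryEquiv.symm_apply_apply] using hx
          · intro hy
            exact ⟨GE.symm y, hy, by simp⟩
        rw [h2]
        exact GE.symm.measurePreserving.measure_preimage
          (box_measurable' _ _).nullMeasurableSet
      rw [hv1, hSdef, volume_box', volume_box', Fin.prod_univ_castSucc]
      simp only [Fin.snoc_castSucc, Fin.snoc_last]
      have hfac : ∀ i : Fin m, ENNReal.ofReal ((1-l)*b i - (1-l)*a i)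
          = ENNReal.ofReal (1-l) * ENNReal.ofReal (b i - a i) := by
        intro i; rw [← ENNReal.ofReal_mul h1l.le]; congr 1; ring
      simp only [hfac]
      rw [Finset.prod_mul_distrib, Finset.prod_const, Finset.card_univ, Fintype.card_fin]
      have h2lh : ((1-l)*s + l*h) - ((1-l)*s - l*h) = 2*l*h := by ring
      rw [h2lh]
      have hsplit : (2*l*h*(1-l)^m : ℝ) = (2*l*h) * (1-l)^m := by ring
      rw [hsplit, ENNReal.ofReal_mul (by nlinarith : (0:ℝ) ≤ 2*l*h),
        ENNReal.ofReal_pow h1l.le]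
      ring
end
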